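/- Given a left recollement (B, A, C, i^*, i_*, j_!, j^*) of abelian categories, the pair (Ker i^*, Im i_*) is a torsion pair in A, where Ker i^* = ^{⊥₀}(Im i_*) := {A | Hom(A, i_* B) = 0 for all B ∈ B}; the torsion decomposition of A is 0 ⟶ ker(η_A) ⟶ A ⟶ i_* i^* A ⟶ 0 with η the unit of (i^*, i_*). -/

import Mathlib

open CategoryTheory Limits

/-- A left recollement `(B, A, C, i^*, i_*, j_!, j^*)` of abelian categories:
`i_*` and `j^*` are exact, `i_*` and `j_!` are fully faithful, `(i^*, i_*)` and
`(j_!, j^*)` are adjoint pairs, and the essential image of `i_*` is the kernel of `j^*`. -/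
structure LeftRecollement (B A C : Type*) [Category B] [Category A] [Category C]
    [Abelian B] [Abelian A] [Abelian C] where
  iUpper : A ⥤ B      -- i^*
  iStar : B ⥤ A       -- i_*
  jShriek : C ⥤ A     -- j_!
  jStar : A ⥤ C       -- j^*
  iStar_preservesFiniteLimits : PreservesFiniteLimits iStar
  iStar_preservesFiniteColimits : PreservesFiniteColimits iStar
  jStar_preservesFiniteLimits : PreservesFiniteLimits jStar
  jStar_preservesFiniteColimits : PreservesFiniteColimits jStar
  iStar_full : iStar.Full
  iStar_faithful : iStar.Faithful
  jShriek_full : jShriek.Full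
  jShriek_faithful : jShriek.Faithful
  adj_i : iUpper ⊣ iStar
  adj_j : jShriek ⊣ jStar
  im_eq_ker : ∀ X : A, (∃ Y : B, Nonempty (iStar.obj Y ≅ X)) ↔ IsZero (jStar.obj X)

/-!
The unit `η` of `i^* ⊣ i_*` is the reflection of `A` onto `Im i_* = Ker j^*`: every map
`X ⟶ i_* Y` factors through `η_X`, which gives the orthogonality. Since `j^*` is exact and kills
`i_* i^* X`, the cokernel of `η_X` lies in `Im i_*`, where `η_X` is cancellable, so it vanishes.
For `g : ker η_X ⟶ i_* Y`, the pushout of `ker η_X ↪ X` along `g` is again killed by `j^*`,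
so `g` extends to a map from `X` into `Im i_*`; such a map vanishes on `ker η_X`, and the pushout
of a mono is a mono, so `g = 0`.
-/

namespace CategoryTheory.Adjunction

variable {C D : Type*} [Category C] [Category D] {F : C ⥤ D} {G : D ⥤ C}

lemma isZero_obj_iff_forall_eq_zero [HasZeroMorphisms C] [HasZeroMorphisms D]
    [G.PreservesZeroMorphisms] (adj : F ⊣ G) (X : C) :
    IsZero (F.obj X) ↔ ∀ (Y : D) (f : X ⟶ G.obj Y), f = 0 := by
  refine ⟨fun hX Y f => ?_, fun h => ?_⟩
  · rw [← (adj.homEquiv X Y).apply_symm_apply f, hX.eq_of_src ((adj.homEquiv X Y).symm f) 0,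
      adj.homEquiv_unit, G.map_zero, comp_zero]
  · rw [IsZero.iff_id_eq_zero]
    exact (adj.homEquiv X _).injective (by rw [h _ (adj.homEquiv X _ _), h _ (adj.homEquiv X _ 0)])

lemma comp_eq_zero_of_comp_unit_app_eq_zero [HasZeroMorphisms C] (adj : F ⊣ G) {K X Z : C}
    {k : K ⟶ X} (hk : k ≫ adj.unit.app X = 0) (hZ : G.essImage Z) (f : X ⟶ Z) : k ≫ f = 0 := by
  obtain ⟨W, ⟨e⟩⟩ := hZ
  rw [← cancel_mono e.inv, zero_comp, Category.assoc,
    ← (adj.homEquiv X W).apply_symm_apply (f ≫ e.inv), adj.homEquiv_unit, reassoc_of% hk,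
    zero_comp]

lemma eq_zero_of_isZero_obj_of_mem_essImage [HasZeroMorphisms C] [HasZeroMorphisms D]
    [G.PreservesZeroMorphisms] (adj : F ⊣ G) {X Z : C} (hX : IsZero (F.obj X))
    (hZ : G.essImage Z) (f : X ⟶ Z) : f = 0 := by
  simpa using adj.comp_eq_zero_of_comp_unit_app_eq_zero
    ((G.map_isZero hX).eq_of_tgt (𝟙 X ≫ adj.unit.app X) 0) hZ f

lemma unit_app_comp_injective [G.Full] (adj : F ⊣ G) {X Z : C} (hZ : G.essImage Z)
    {g h : G.obj (F.obj X) ⟶ Z} (hgh : adj.unit.app X ≫ g = adj.unit.app X ≫ h) : g = h := by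
  obtain ⟨W, ⟨e⟩⟩ := hZ
  obtain ⟨u, hu⟩ := G.map_surjective (g ≫ e.inv)
  obtain ⟨v, hv⟩ := G.map_surjective (h ≫ e.inv)
  have huv : u = v := (adj.homEquiv X W).injective <| by
    rw [adj.homEquiv_unit, adj.homEquiv_unit, hu, hv, reassoc_of% hgh]
  rw [← cancel_mono e.inv, ← hu, ← hv, huv]

lemma epi_unit_app_of_mem_essImage_cokernel [Preadditive C] [G.Full] (adj : F ⊣ G) (X : C)
    [HasCokernel (adj.unit.app X)] (h : G.essImage (cokernel (adj.unit.app X))) :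
    Epi (adj.unit.app X) :=
  Preadditive.epi_of_cokernel_zero <|
    adj.unit_app_comp_injective h (by rw [cokernel.condition, comp_zero])

end CategoryTheory.Adjunction

namespace CategoryTheory.Functor

variable {C D : Type*} [Category C] [Category D] (J : C ⥤ D)

lemma isZero_obj_cokernel_of_isZero [HasZeroMorphisms C] [HasZeroMorphisms D]
    [J.PreservesZeroMorphisms] {X Y : C} (f : X ⟶ Y) [HasCokernel f]
    [PreservesColimit (parallelPair f 0) J] (hY : IsZero (J.obj Y)) :
    IsZero (J.obj (cokernel f)) :=
  (IsZero.of_epi (cokernel.π (J.map f)) hY).of_iso (PreservesCokernel.iso J f)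

lemma isZero_obj_pushout_of_epi_map [HasZeroMorphisms D] {X Y Z : C} (f : X ⟶ Y) (g : X ⟶ Z)
    [HasPushout f g] [PreservesColimit (span f g) J] [HasPushout (J.map f) (J.map g)]
    [Epi (J.map f)] (hZ : IsZero (J.obj Z)) : IsZero (J.obj (pushout f g)) :=
  (IsZero.of_epi (pushout.inr (J.map f) (J.map g)) hZ).of_iso (PreservesPushout.iso J f g).symm

lemma epi_map_kernel_ι_of_isZero [Abelian C] [Abelian D] [PreservesFiniteLimits J]
    [PreservesFiniteColimits J] {X Y : C} (f : X ⟶ Y) [Epi f] (hY : IsZero (J.obj Y)) :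
    Epi (J.map (kernel.ι f)) := by
  let S : ShortComplex C := ⟨kernel.ι f, f, kernel.condition f⟩
  have hS : S.ShortExact := { exact := S.exact_of_f_is_kernel (kernelIsKernel f) }
  exact (hS.map_of_exact J).exact.epi_f (hY.eq_of_tgt _ _)

end CategoryTheory.Functor

namespace LeftRecollement

variable {B A C : Type*} [Category B] [Category A] [Category C] [Abelian B] [Abelian A]
  [Abelian C] (R : LeftRecollement B A C)

attribute [instance] iStar_full jStar_preservesFiniteLimits jStar_preservesFiniteColimits

lemma mem_essImage_iStar_iff (X : A) : R.iStar.essImage X ↔ IsZero (R.jStar.obj X) :=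
  R.im_eq_ker X

lemma isZero_jStar_obj_iStar_obj (Y : B) : IsZero (R.jStar.obj (R.iStar.obj Y)) :=
  (R.mem_essImage_iStar_iff _).1 (R.iStar.obj_mem_essImage Y)

instance : R.iStar.PreservesZeroMorphisms :=
  have := R.adj_i.isRightAdjoint
  inferInstance

instance : R.jStar.PreservesZeroMorphisms :=
  have := R.adj_j.isRightAdjoint
  inferInstance

lemma epi_unit_app (X : A) : Epi (R.adj_i.unit.app X) :=
  R.adj_i.epi_unit_app_of_mem_essImage_cokernel X <| (R.mem_essImage_iStar_iff _).2 <|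
    R.jStar.isZero_obj_cokernel_of_isZero _ (R.isZero_jStar_obj_iStar_obj _)

lemma isZero_iUpper_obj_kernel_unit_app (X : A) :
    IsZero (R.iUpper.obj (kernel (R.adj_i.unit.app X))) := by
  have := R.epi_unit_app X
  set ι := kernel.ι (R.adj_i.unit.app X)
  have : Epi (R.jStar.map ι) :=
    R.jStar.epi_map_kernel_ι_of_isZero _ (R.isZero_jStar_obj_iStar_obj _)
  refine (R.adj_i.isZero_obj_iff_forall_eq_zero _).2 fun Z g => ?_
  have hP : R.iStar.essImage (pushout ι g) := (R.mem_essImage_iStar_iff _).2 <|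
    R.jStar.isZero_obj_pushout_of_epi_map ι g (R.isZero_jStar_obj_iStar_obj Z)
  have hι : ι ≫ pushout.inl ι g = 0 :=
    R.adj_i.comp_eq_zero_of_comp_unit_app_eq_zero (kernel.condition _) hP _
  rw [← cancel_mono (pushout.inr ι g), zero_comp, ← pushout.condition, hι]

end LeftRecollement

/-- `(Ker i^*, Im i_*)` is a torsion pair in `A`, where
`Ker i^* = ^{⊥₀}(Im i_*)`; the torsion decomposition of `X` is
`0 ⟶ ker(η_X) ⟶ X ⟶ i_* i^* X ⟶ 0` with `η` the unit of `(i^*, i_*)`. -/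
theorem stmt14 {B A C : Type*} [Category B] [Category A] [Category C]
    [Abelian B] [Abelian A] [Abelian C] (R : LeftRecollement B A C) :
    (∀ X : A, IsZero (R.iUpper.obj X) ↔ ∀ (Y : B) (f : X ⟶ R.iStar.obj Y), f = 0) ∧
    (∀ (X Y : A), IsZero (R.iUpper.obj X) → (∃ Z : B, Nonempty (R.iStar.obj Z ≅ Y)) →
      ∀ f : X ⟶ Y, f = 0) ∧
    (∀ X : A, Epi (R.adj_i.unit.app X) ∧
      IsZero (R.iUpper.obj (kernel (R.adj_i.unit.app X)))) :=
  ⟨R.adj_i.isZero_obj_iff_forall_eq_zero,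
    fun _ _ hX hY => R.adj_i.eq_zero_of_isZero_obj_of_mem_essImage hX hY,
    fun X => ⟨R.epi_unit_app X, R.isZero_iUpper_obj_kernel_unit_app X⟩⟩
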